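/- arXiv:1301.2002 — 7 statements merged into one kernel-verified Lean document; each statement's English description precedes it below -/
import Mathlib

section
/- Let h : ℝ → ℝ be continuously differentiable, L > 0, and let V : [0, L] → ℝ be a non-constant function which is continuously differentiable on [0, L] and twice differentiable on (0, L), and which satisfies V''(x) + h(V(x)) = 0 for all x ∈ (0, L) and V'(0) = V'(L) = 0. Then there exist x₀ ∈ [0, L] and a₀ ∈ ℝ such that V(x₀) = a₀, h(a₀) = 0, and h'(a₀) ≥ 0. -/
/-!
Take a maximal interval `(α, β)` on which `V' > 0` (the case `V' < 0` follows by passing to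
`-V` and `y ↦ -h (-y)`). There `V` increases and `V'` vanishes at the ends. Near `α` the
derivative of `V'` is `-h (V α)` while `V'` grows from `0`, so `h (V α) ≤ 0`; likewise
`h (V β) ≥ 0`. The last zero of `h` in `[V α, V β]` before a point where `h > 0` (or `V β`
itself if `h ≤ 0` throughout) is a zero where `h` crosses upwards, and it is a value of `V`.
-/

open Set Filter Topology

theorem HasDerivWithinAt.nonneg_of_eventually_ge_right {f : ℝ → ℝ} {a e : ℝ}
    (hf : HasDerivWithinAt f e (Ioi a) a) (hge : ∀ᶠ x in 𝓝[>] a, f a ≤ f x) : 0 ≤ e := by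
  refine ge_of_tendsto ((hasDerivWithinAt_iff_tendsto_slope' (lt_irrefl a : a ∉ _)).1 hf) ?_
  filter_upwards [hge, self_mem_nhdsWithin] with x hx hax
  rw [slope_def_field]
  exact div_nonneg (sub_nonneg.2 hx) (sub_nonneg.2 (le_of_lt hax))

theorem HasDerivWithinAt.nonneg_of_eventually_le_left {f : ℝ → ℝ} {a e : ℝ}
    (hf : HasDerivWithinAt f e (Iio a) a) (hle : ∀ᶠ x in 𝓝[<] a, f x ≤ f a) : 0 ≤ e := by
  refine ge_of_tendsto ((hasDerivWithinAt_iff_tendsto_slope' (lt_irrefl a : a ∉ _)).1 hf) ?_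
  filter_upwards [hle, self_mem_nhdsWithin] with x hx hxa
  rw [slope_def_field]
  exact div_nonneg_of_nonpos (sub_nonpos.2 hx) (sub_nonpos.2 (le_of_lt hxa))

section Zeros

variable {f : ℝ → ℝ} {a b : ℝ}

theorem ContinuousOn.exists_last_zero (hf : ContinuousOn f (Icc a b)) (hab : a ≤ b)
    (ha : f a ≤ 0) (hb : 0 < f b) :
    ∃ z ∈ Ico a b, f z = 0 ∧ ∀ x ∈ Ioc z b, 0 < f x := by
  set S := Icc a b ∩ f ⁻¹' Iic 0
  have hSa : a ∈ S := ⟨left_mem_Icc.2 hab, ha⟩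
  have hS : BddAbove S := ⟨b, fun x hx => hx.1.2⟩
  have hz : sSup S ∈ S :=
    (hf.preimage_isClosed_of_isClosed isClosed_Icc isClosed_Iic).csSup_mem ⟨a, hSa⟩ hS
  have hzb : sSup S < b := lt_of_le_of_ne hz.1.2 fun h => (h ▸ hz.2 : f b ≤ 0).not_gt hb
  have hpos : ∀ x ∈ Ioc (sSup S) b, 0 < f x := fun x hx =>
    lt_of_not_ge fun hfx => (le_csSup hS ⟨⟨hz.1.1.trans hx.1.le, hx.2⟩, hfx⟩).not_gt hx.1
  refine ⟨sSup S, ⟨hz.1.1, hzb⟩, ?_, hpos⟩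
  obtain ⟨y, hy, hfy⟩ := intermediate_value_Icc hzb.le (hf.mono (Icc_subset_Icc hz.1.1 le_rfl))
    ⟨hz.2, hb.le⟩
  rcases hy.1.eq_or_lt with rfl | hzy
  · exact hfy
  · exact absurd hfy (hpos y ⟨hzy, hy.2⟩).ne'

theorem ContinuousOn.exists_first_zero (hf : ContinuousOn f (Icc a b)) (hab : a ≤ b)
    (ha : 0 < f a) (hb : f b ≤ 0) :
    ∃ z ∈ Ioc a b, f z = 0 ∧ ∀ x ∈ Ico a z, 0 < f x := by
  have hf' : ContinuousOn (fun x => f (-x)) (Icc (-b) (-a)) :=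
    hf.comp continuousOn_neg fun x hx => ⟨le_neg.1 hx.2, neg_le.1 hx.1⟩
  obtain ⟨z, hz, hfz, hpos⟩ :=
    hf'.exists_last_zero (neg_le_neg hab) (by simpa using hb) (by simpa using ha)
  refine ⟨-z, ⟨lt_neg.1 hz.2, neg_le.1 hz.1⟩, hfz, fun x hx => ?_⟩
  simpa using hpos (-x) ⟨lt_neg.1 hx.2, neg_le_neg hx.1⟩

end Zeros

theorem exists_mem_Icc_eq_zero_deriv_nonneg {h : ℝ → ℝ} (hd : Differentiable ℝ h)
    {a b : ℝ} (hab : a < b) (ha : h a ≤ 0) (hb : 0 ≤ h b) :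
    ∃ z ∈ Icc a b, h z = 0 ∧ 0 ≤ deriv h z := by
  by_cases hc : ∃ c ∈ Icc a b, 0 < h c
  · obtain ⟨c, hc, hhc⟩ := hc
    obtain ⟨z, hz, hhz, hpos⟩ := hd.continuous.continuousOn.exists_last_zero hc.1 ha hhc
    refine ⟨z, ⟨hz.1, hz.2.le.trans hc.2⟩, hhz, ?_⟩
    refine (hd z).hasDerivAt.hasDerivWithinAt.nonneg_of_eventually_ge_right ?_
    filter_upwards [Ioo_mem_nhdsGT hz.2] with x hx
    exact hhz ▸ (hpos x ⟨hx.1, hx.2.le⟩).le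
  · push Not at hc
    have hhb : h b = 0 := le_antisymm (hc b (right_mem_Icc.2 hab.le)) hb
    refine ⟨b, right_mem_Icc.2 hab.le, hhb, ?_⟩
    refine (hd b).hasDerivAt.hasDerivWithinAt.nonneg_of_eventually_le_left ?_
    filter_upwards [Ioo_mem_nhdsLT hab] with x hx
    exact hhb ▸ hc x ⟨hx.1.le, hx.2.le⟩

section Endpoints

variable {f f' : ℝ → ℝ} {a b : ℝ}

theorem nonneg_at_left_of_hasDerivAt_of_pos (hab : a < b) (hf : ContinuousOn f (Icc a b))
    (hf' : ∀ x ∈ Ioo a b, HasDerivAt f (f' x) x) (hf'a : ContinuousWithinAt f' (Ioi a) a)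
    (ha : f a = 0) (hpos : ∀ x ∈ Ioo a b, 0 < f x) : 0 ≤ f' a := by
  have hderiv : HasDerivWithinAt f (f' a) (Ici a) a := by
    refine hasDerivWithinAt_Ici_of_tendsto_deriv
      (fun x hx => (hf' x hx).differentiableAt.differentiableWithinAt)
      ((hf a (left_mem_Icc.2 hab.le)).mono Ioo_subset_Icc_self) (Ioo_mem_nhdsGT hab)
      (hf'a.tendsto.congr' ?_)
    filter_upwards [Ioo_mem_nhdsGT hab] with x hx using (hf' x hx).deriv.symm
  refine (hderiv.mono Ioi_subset_Ici_self).nonneg_of_eventually_ge_right ?_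
  filter_upwards [Ioo_mem_nhdsGT hab] with x hx
  exact ha ▸ (hpos x hx).le

theorem nonpos_at_right_of_hasDerivAt_of_pos (hab : a < b) (hf : ContinuousOn f (Icc a b))
    (hf' : ∀ x ∈ Ioo a b, HasDerivAt f (f' x) x) (hf'b : ContinuousWithinAt f' (Iio b) b)
    (hb : f b = 0) (hpos : ∀ x ∈ Ioo a b, 0 < f x) : f' b ≤ 0 := by
  have hderiv : HasDerivWithinAt f (f' b) (Iic b) b := by
    refine hasDerivWithinAt_Iic_of_tendsto_deriv
      (fun x hx => (hf' x hx).differentiableAt.differentiableWithinAt)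
      ((hf b (right_mem_Icc.2 hab.le)).mono Ioo_subset_Icc_self) (Ioo_mem_nhdsLT hab)
      (hf'b.tendsto.congr' ?_)
    filter_upwards [Ioo_mem_nhdsLT hab] with x hx using (hf' x hx).deriv.symm
  refine neg_nonneg.1 <| (hderiv.mono Iio_subset_Iic_self).neg.nonneg_of_eventually_le_left ?_
  filter_upwards [Ioo_mem_nhdsLT hab] with x hx
  simpa [hb] using (hpos x hx).le

end Endpoints

theorem exists_zero_deriv_nonneg_of_deriv_pos {h V V' : ℝ → ℝ} (hd : Differentiable ℝ h)
    {a b c : ℝ} (hV : ∀ x ∈ Icc a b, HasDerivWithinAt V (V' x) (Icc a b) x)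
    (hV'c : ContinuousOn V' (Icc a b)) (hV'' : ∀ x ∈ Ioo a b, HasDerivAt V' (-h (V x)) x)
    (ha : V' a = 0) (hb : V' b = 0) (hc : c ∈ Icc a b) (hV'c0 : 0 < V' c) :
    ∃ x₀ ∈ Icc a b, h (V x₀) = 0 ∧ 0 ≤ deriv h (V x₀) := by
  obtain ⟨α, hα, hV'α, hposα⟩ :=
    (hV'c.mono (Icc_subset_Icc le_rfl hc.2)).exists_last_zero hc.1 ha.le hV'c0
  obtain ⟨β, hβ, hV'β, hposβ⟩ :=
    (hV'c.mono (Icc_subset_Icc hc.1 le_rfl)).exists_first_zero hc.2 hV'c0 hb.le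
  have hαβ : α < β := hα.2.trans hβ.1
  have hIcc : Icc α β ⊆ Icc a b := Icc_subset_Icc hα.1 hβ.2
  have hIoo : Ioo α β ⊆ Ioo a b := Ioo_subset_Ioo hα.1 hβ.2
  have hpos : ∀ x ∈ Ioo α β, 0 < V' x := fun x hx =>
    (le_or_gt x c).elim (fun hxc => hposα x ⟨hx.1, hxc⟩) fun hcx => hposβ x ⟨hcx.le, hx.2⟩
  have hVc : ContinuousOn V (Icc α β) := fun x hx =>
    (hV x (hIcc hx)).continuousWithinAt.mono hIcc
  have hhV : ContinuousOn (fun x => -h (V x)) (Icc α β) :=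
    (hd.continuous.comp_continuousOn hVc).neg
  have hV''αβ : ∀ x ∈ Ioo α β, HasDerivAt V' (-h (V x)) x := fun x hx => hV'' x (hIoo hx)
  have hhα : h (V α) ≤ 0 := neg_nonneg.1 <|
    nonneg_at_left_of_hasDerivAt_of_pos (f' := fun x => -h (V x)) hαβ (hV'c.mono hIcc) hV''αβ
      ((hhV α (left_mem_Icc.2 hαβ.le)).mono_of_mem_nhdsWithin (Icc_mem_nhdsGT hαβ))
      hV'α hpos
  have hhβ : 0 ≤ h (V β) := neg_nonpos.1 <|
    nonpos_at_right_of_hasDerivAt_of_pos (f' := fun x => -h (V x)) hαβ (hV'c.mono hIcc) hV''αβ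
      ((hhV β (right_mem_Icc.2 hαβ.le)).mono_of_mem_nhdsWithin (Icc_mem_nhdsLT hαβ))
      hV'β hpos
  have hVαβ : V α < V β := by
    refine strictMonoOn_of_deriv_pos (convex_Icc α β) hVc (fun x hx => ?_)
      (left_mem_Icc.2 hαβ.le) (right_mem_Icc.2 hαβ.le) hαβ
    rw [interior_Icc] at hx
    have hx' := hIoo hx
    rw [((hV x (Ioo_subset_Icc_self hx')).hasDerivAt (Icc_mem_nhds hx'.1 hx'.2)).deriv]
    exact hpos x hx
  obtain ⟨a₀, ha₀, hha₀, hda₀⟩ :=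
    exists_mem_Icc_eq_zero_deriv_nonneg hd hVαβ hhα hhβ
  obtain ⟨x₀, hx₀, rfl⟩ := intermediate_value_Icc hαβ.le hVc ha₀
  exact ⟨x₀, hIcc hx₀, hha₀, hda₀⟩

theorem stmt_1_general
    (h : ℝ → ℝ) (hh : ContDiff ℝ 1 h)
    (L : ℝ)
    (V V' V'' : ℝ → ℝ)
    (hVnc : ¬ ∃ c : ℝ, ∀ x ∈ Icc 0 L, V x = c)
    (hV' : ∀ x ∈ Icc 0 L, HasDerivWithinAt V (V' x) (Icc 0 L) x)
    (hV'c : ContinuousOn V' (Icc 0 L))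
    (hV'' : ∀ x ∈ Ioo 0 L, HasDerivAt V' (V'' x) x)
    (heq : ∀ x ∈ Ioo 0 L, V'' x + h (V x) = 0)
    (hN0 : V' 0 = 0) (hNL : V' L = 0) :
    ∃ x₀ ∈ Icc 0 L, ∃ a₀ : ℝ, V x₀ = a₀ ∧ h a₀ = 0 ∧ deriv h a₀ ≥ 0 := by
  have hd : Differentiable ℝ h := hh.differentiable one_ne_zero
  have hV'' : ∀ x ∈ Ioo 0 L, HasDerivAt V' (-h (V x)) x := fun x hx =>
    (hV'' x hx).congr_deriv (eq_neg_of_add_eq_zero_left (heq x hx))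
  obtain ⟨c, hc, hV'c0⟩ : ∃ c ∈ Icc 0 L, V' c ≠ 0 := by
    by_contra! hV'0
    refine hVnc ⟨V 0, constant_of_has_deriv_right_zero
      (fun x hx => (hV' x hx).continuousWithinAt) fun x hx => ?_⟩
    have hx' := Ico_subset_Icc_self hx
    exact (hV'0 x hx' ▸ hV' x hx').mono_of_mem_nhdsWithin (Icc_mem_nhdsGE_of_mem hx)
  rcases hV'c0.lt_or_gt with hneg | hpos
  · -- `-V` solves the equation for `y ↦ -h (-y)`, whose derivative at `y` is `h' (-y)`.
    obtain ⟨x₀, hx₀, hz, hd₀⟩ :=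
      exists_zero_deriv_nonneg_of_deriv_pos (h := fun y => -h (-y)) (V := -V) (V' := -V')
        (hd.comp differentiable_neg).neg (fun x hx => (hV' x hx).neg) hV'c.neg
        (fun x hx => by simpa using (hV'' x hx).neg) (by simp [hN0]) (by simp [hNL]) hc
        (by simpa using hneg)
    refine ⟨x₀, hx₀, V x₀, rfl, by simpa using hz, ?_⟩
    simpa [deriv_comp_neg] using hd₀
  · obtain ⟨x₀, hx₀, hz, hd₀⟩ :=
      exists_zero_deriv_nonneg_of_deriv_pos hd hV' hV'c hV'' hN0 hNL hc hpos
    exact ⟨x₀, hx₀, V x₀, rfl, hz, hd₀⟩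

/-- Lemma: for a non-constant solution of the 1D Neumann problem V'' + h(V) = 0,
there is a point x₀ and a value a₀ = V(x₀) with h(a₀) = 0 and h'(a₀) ≥ 0. -/
theorem stmt_1
    (h : ℝ → ℝ) (hh : ContDiff ℝ 1 h)
    (L : ℝ) (hL : 0 < L)
    (V V' V'' : ℝ → ℝ)
    (hVnc : ¬ ∃ c : ℝ, ∀ x ∈ Icc 0 L, V x = c)
    (hV' : ∀ x ∈ Icc 0 L, HasDerivWithinAt V (V' x) (Icc 0 L) x)
    (hV'c : ContinuousOn V' (Icc 0 L))
    (hV'' : ∀ x ∈ Ioo 0 L, HasDerivAt V' (V'' x) x)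
    (heq : ∀ x ∈ Ioo 0 L, V'' x + h (V x) = 0)
    (hN0 : V' 0 = 0) (hNL : V' L = 0) :
    ∃ x₀ ∈ Icc 0 L, ∃ a₀ : ℝ, V x₀ = a₀ ∧ h a₀ = 0 ∧ deriv h a₀ ≥ 0 :=
  stmt_1_general h hh L V V' V'' hVnc hV' hV'c hV'' heq hN0 hNL
end

section
/- Let f, g : ℝ² → ℝ be C² functions, L > 0, and let (U, V) be a non-constant regular stationary solution on [0, L]: V is continuously differentiable on [0, L] and twice differentiable on (0, L), V''(x) + g(U(x), V(x)) = 0 on (0, L), V'(0) = V'(L) = 0, U = k ∘ V for a continuously differentiable function k : ℝ → ℝ satisfying f(k(v), v) = 0 for all v in an open interval containing the range of V. Assume that every constant stationary solution touched by (U, V) is non-degenerate. Then there exists x₀ ∈ [0, L] such that (ū, v̄) := (U(x₀), V(x₀)) is a constant stationary solution (f(ū, v̄) = 0, g(ū, v̄) = 0) and (1 / ∂_u f(ū, v̄)) · (∂_u f(ū, v̄) ∂_v g(ū, v̄) − ∂_v f(ū, v̄) ∂_u g(ū, v̄)) > 0. -/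
/-!
Write `h v = g (k v) v`, so that `V'' = -h(V)`. At a minimum point of `V` on `[0, L]` one has
`V'' ≥ 0`, also when it is an endpoint, thanks to the Neumann condition; hence `h ≤ 0` at
`min V` and likewise `h ≥ 0` at `max V`. The solution being non-constant, `min V < max V`, so `h`
crosses zero upwards in `[min V, max V]`. Every zero of `h` there is a touched constant solution,
at which implicit differentiation along the branch gives `h' = (1/f_u)(f_u g_v − f_v g_u) ≠ 0`;
so the last zero of `h` before it becomes positive is a transversal upward crossing.
-/

open Set

/-- Partial derivative with respect to the first variable. -/
noncomputable def pd1 (f : ℝ → ℝ → ℝ) (u v : ℝ) : ℝ := deriv (fun u' => f u' v) u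

/-- Partial derivative with respect to the second variable. -/
noncomputable def pd2 (f : ℝ → ℝ → ℝ) (u v : ℝ) : ℝ := deriv (fun v' => f u v') v

open Filter Topology

noncomputable def branchDeriv (f g : ℝ → ℝ → ℝ) (k : ℝ → ℝ) (v : ℝ) : ℝ :=
  (1 / pd1 f (k v) v) * (pd1 f (k v) v * pd2 g (k v) v - pd2 f (k v) v * pd1 g (k v) v)

section Calculus

variable {F : ℝ → ℝ → ℝ} {u v : ℝ}

lemma pd1_eq_fderiv (hF : DifferentiableAt ℝ (Function.uncurry F) (u, v)) :
    pd1 F u v = fderiv ℝ (Function.uncurry F) (u, v) (1, 0) :=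
  (hF.hasFDerivAt.comp_hasDerivAt_of_eq u ((hasDerivAt_id u).prodMk (hasDerivAt_const u v))
    rfl).deriv

lemma pd2_eq_fderiv (hF : DifferentiableAt ℝ (Function.uncurry F) (u, v)) :
    pd2 F u v = fderiv ℝ (Function.uncurry F) (u, v) (0, 1) :=
  (hF.hasFDerivAt.comp_hasDerivAt_of_eq v ((hasDerivAt_const v u).prodMk (hasDerivAt_id v))
    rfl).deriv

lemma hasDerivAt_comp_graph {k : ℝ → ℝ} {k' : ℝ} (hk : HasDerivAt k k' v)
    (hF : DifferentiableAt ℝ (Function.uncurry F) (k v, v)) :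
    HasDerivAt (fun t => F (k t) t) (pd1 F (k v) v * k' + pd2 F (k v) v) v := by
  refine (hF.hasFDerivAt.comp_hasDerivAt_of_eq v (hk.prodMk (hasDerivAt_id v)) rfl).congr_deriv ?_
  have hdir : ((k', 1) : ℝ × ℝ) = k' • ((1, 0) : ℝ × ℝ) + ((0, 1) : ℝ × ℝ) := by simp
  rw [pd1_eq_fderiv hF, pd2_eq_fderiv hF, hdir, map_add, map_smul, smul_eq_mul, mul_comm]

/-- Implicit differentiation: `k' = -∂ᵥf / ∂ᵤf` along the branch. -/
lemma hasDerivAt_comp_branch {f g : ℝ → ℝ → ℝ} {k : ℝ → ℝ} {k' : ℝ}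
    (hf : DifferentiableAt ℝ (Function.uncurry f) (k v, v))
    (hg : DifferentiableAt ℝ (Function.uncurry g) (k v, v)) (hk : HasDerivAt k k' v)
    (hfk : ∀ᶠ t in 𝓝 v, f (k t) t = 0) (hfu : pd1 f (k v) v ≠ 0) :
    HasDerivAt (fun t => g (k t) t) (branchDeriv f g k v) v := by
  have himplicit : pd1 f (k v) v * k' + pd2 f (k v) v = 0 :=
    (hasDerivAt_comp_graph hk hf).unique ((hasDerivAt_const v 0).congr_of_eventuallyEq hfk)
  refine (hasDerivAt_comp_graph hk hg).congr_deriv ?_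
  unfold branchDeriv
  field_simp
  linear_combination pd1 g (k v) v * himplicit

end Calculus

section Zeros

variable {h D : ℝ → ℝ} {a b c d v : ℝ}

lemma HasDerivAt.eventually_nhdsLT_pos (hd : HasDerivAt h d v) (hv : h v = 0) (hneg : d < 0) :
    ∀ᶠ t in 𝓝[<] v, 0 < h t := by
  have hslope := (hasDerivWithinAt_iff_tendsto_slope' (s := Iio v) (lt_irrefl v)).1
    hd.hasDerivWithinAt
  filter_upwards [hslope.eventually (gt_mem_nhds hneg), self_mem_nhdsWithin] with t ht htv
  rw [slope_def_field, hv, sub_zero] at ht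
  rcases div_neg_iff.1 ht with ⟨hpos, -⟩ | ⟨-, hpos⟩
  · exact hpos
  · exact absurd hpos (sub_neg.2 htv).not_gt

lemma HasDerivAt.nonneg_of_eventually_nhdsGT_pos (hd : HasDerivAt h d v) (hv : h v = 0)
    (hpos : ∀ᶠ t in 𝓝[>] v, 0 < h t) : 0 ≤ d := by
  have hslope := (hasDerivWithinAt_iff_tendsto_slope' (s := Ioi v) (lt_irrefl v)).1
    hd.hasDerivWithinAt
  refine ge_of_tendsto hslope ?_
  filter_upwards [hpos, self_mem_nhdsWithin] with t ht htv
  rw [slope_def_field, hv, sub_zero]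
  exact div_nonneg ht.le (sub_pos.2 htv).le

lemma exists_last_zero_of_nonpos_of_pos (hac : a ≤ c) (hh : ContinuousOn h (Icc a c))
    (ha : h a ≤ 0) (hc : 0 < h c) : ∃ v ∈ Ico a c, h v = 0 ∧ ∀ t ∈ Ioc v c, 0 < h t := by
  have hcompact : IsCompact (Icc a c ∩ h ⁻¹' Iic 0) := isCompact_Icc.of_isClosed_subset
    (hh.preimage_isClosed_of_isClosed isClosed_Icc isClosed_Iic) inter_subset_left
  obtain ⟨v, ⟨hv, hv0⟩, hmax⟩ := hcompact.exists_isGreatest ⟨a, left_mem_Icc.2 hac, ha⟩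
  have hright : ∀ t ∈ Ioc v c, 0 < h t := fun t ht =>
    not_le.1 fun ht0 => (hmax ⟨⟨hv.1.trans ht.1.le, ht.2⟩, ht0⟩).not_gt ht.1
  have hvc : v < c := hv.2.lt_of_ne fun hvc => (hvc ▸ hv0).not_gt hc
  obtain ⟨t, ht, ht0⟩ := intermediate_value_Icc hvc.le (hh.mono (Icc_subset_Icc_left hv.1))
    ⟨hv0, hc.le⟩
  obtain rfl : v = t := ht.1.eq_of_not_lt fun hvt => (hright t ⟨hvt, ht.2⟩).ne' ht0
  exact ⟨v, ⟨hv.1, hvc⟩, ht0, hright⟩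

lemma exists_zero_deriv_pos_of_nonpos_of_pos (hac : a ≤ c) (hh : ContinuousOn h (Icc a c))
    (ha : h a ≤ 0) (hc : 0 < h c)
    (hD : ∀ v ∈ Icc a c, h v = 0 → HasDerivAt h (D v) v ∧ D v ≠ 0) :
    ∃ v ∈ Icc a c, h v = 0 ∧ 0 < D v := by
  obtain ⟨v, hv, hv0, hright⟩ := exists_last_zero_of_nonpos_of_pos hac hh ha hc
  obtain ⟨hder, hne⟩ := hD v (Ico_subset_Icc_self hv) hv0
  refine ⟨v, Ico_subset_Icc_self hv, hv0,
    (hder.nonneg_of_eventually_nhdsGT_pos hv0 ?_).lt_of_ne' hne⟩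
  filter_upwards [Ioo_mem_nhdsGT hv.2] with t ht using hright t (Ioo_subset_Ioc_self ht)

lemma exists_zero_deriv_pos_of_nonpos_of_nonneg (hab : a < b) (hh : ContinuousOn h (Icc a b))
    (ha : h a ≤ 0) (hb : 0 ≤ h b)
    (hD : ∀ v ∈ Icc a b, h v = 0 → HasDerivAt h (D v) v ∧ D v ≠ 0) :
    ∃ v ∈ Icc a b, h v = 0 ∧ 0 < D v := by
  rcases hb.lt_or_eq with hb | hb
  · exact exists_zero_deriv_pos_of_nonpos_of_pos hab.le hh ha hb hD
  obtain ⟨hder, hne⟩ := hD b (right_mem_Icc.2 hab.le) hb.symm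
  rcases hne.lt_or_gt with hneg | hpos
  · obtain ⟨c, hc, hac, hcb⟩ :=
      ((hder.eventually_nhdsLT_pos hb.symm hneg).and (Ioo_mem_nhdsLT hab)).exists
    have hsub : Icc a c ⊆ Icc a b := Icc_subset_Icc_right hcb.le
    obtain ⟨v, hv, hv0, hDv⟩ := exists_zero_deriv_pos_of_nonpos_of_pos hac.le (hh.mono hsub) ha hc
      fun v hv => hD v (hsub hv)
    exact ⟨v, hsub hv, hv0, hDv⟩
  · exact ⟨b, right_mem_Icc.2 hab.le, hb.symm, hpos⟩

end Zeros

section Neumann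

variable {W W' G : ℝ → ℝ} {a b p q x₁ : ℝ}

lemma slope_mem_Ioo_of_deriv2_neg (hpq : p < q) (hW : ContinuousOn W (Icc p q))
    (hW' : ∀ x ∈ Ioo p q, HasDerivAt W (W' x) x) (hW'c : ContinuousOn W' (Icc p q))
    (hW'' : ∀ x ∈ Ioo p q, HasDerivAt W' (G x) x) (hG : ∀ x ∈ Ioo p q, G x < 0) :
    slope W p q ∈ Ioo (W' q) (W' p) := by
  have hanti : StrictAntiOn W' (Icc p q) :=
    strictAntiOn_of_hasDerivWithinAt_neg (convex_Icc p q) hW'c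
      (fun x hx => by rw [interior_Icc] at hx ⊢; exact (hW'' x hx).hasDerivWithinAt)
      fun x hx => hG x (by rwa [interior_Icc] at hx)
  obtain ⟨ξ, hξ, hξslope⟩ := exists_hasDerivAt_eq_slope W W' hpq hW hW'
  rw [slope_def_field, ← hξslope]
  exact ⟨hanti (Ioo_subset_Icc_self hξ) (right_mem_Icc.2 hpq.le) hξ.2,
    hanti (left_mem_Icc.2 hpq.le) (Ioo_subset_Icc_self hξ) hξ.1⟩

lemma deriv_eq_zero_of_isMinOn_of_neumann
    (hW : ∀ x ∈ Icc a b, HasDerivWithinAt W (W' x) (Icc a b) x) (ha : W' a = 0) (hb : W' b = 0)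
    (hx₁ : x₁ ∈ Icc a b) (hmin : IsMinOn W (Icc a b) x₁) : W' x₁ = 0 := by
  rcases hx₁.1.eq_or_lt with rfl | hax₁
  · exact ha
  rcases hx₁.2.eq_or_lt with rfl | hx₁b
  · exact hb
  have hnhds := Icc_mem_nhds hax₁ hx₁b
  exact (hmin.isLocalMin hnhds).hasDerivAt_eq_zero ((hW x₁ hx₁).hasDerivAt hnhds)

lemma deriv2_nonneg_of_isMinOn_of_neumann (hab : a < b)
    (hW : ∀ x ∈ Icc a b, HasDerivWithinAt W (W' x) (Icc a b) x)
    (hW'c : ContinuousOn W' (Icc a b)) (hW'' : ∀ x ∈ Ioo a b, HasDerivAt W' (G x) x)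
    (hGc : ContinuousOn G (Icc a b)) (ha : W' a = 0) (hb : W' b = 0)
    (hx₁ : x₁ ∈ Icc a b) (hmin : IsMinOn W (Icc a b) x₁) : 0 ≤ G x₁ := by
  by_contra! hG
  have hWc : ContinuousOn W (Icc a b) := fun x hx => (hW x hx).continuousWithinAt
  have hWx₁ : W' x₁ = 0 := deriv_eq_zero_of_isMinOn_of_neumann hW ha hb hx₁ hmin
  have hneg : ∀ᶠ x in 𝓝[Icc a b] x₁, G x < 0 := hGc x₁ hx₁ (gt_mem_nhds hG)
  have hslope : ∀ p q, a ≤ p → p < q → q ≤ b → (∀ x ∈ Ioo p q, G x < 0) →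
      slope W p q ∈ Ioo (W' q) (W' p) := fun p q hap hpq hqb hGneg => by
    have hint : Ioo p q ⊆ Ioo a b := Ioo_subset_Ioo hap hqb
    exact slope_mem_Ioo_of_deriv2_neg hpq (hWc.mono (Icc_subset_Icc hap hqb))
      (fun x hx => (hW x (Ioo_subset_Icc_self (hint hx))).hasDerivAt
        (Icc_mem_nhds (hint hx).1 (hint hx).2))
      (hW'c.mono (Icc_subset_Icc hap hqb)) (fun x hx => hW'' x (hint hx)) hGneg
  rcases hx₁.2.lt_or_eq with hx₁b | rfl
  · obtain ⟨u, hu, hsub⟩ := mem_nhdsGT_iff_exists_Ioo_subset.1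
      (nhdsWithin_le_of_mem (Icc_mem_nhdsGT_of_mem ⟨hx₁.1, hx₁b⟩) hneg)
    set q := min u b
    have hq : x₁ < q := lt_min hu hx₁b
    have hs := (hslope x₁ q hx₁.1 hq (min_le_right u b)
      fun x hx => hsub ⟨hx.1, hx.2.trans_le (min_le_left u b)⟩).2
    rw [hWx₁, slope_def_field, div_lt_iff₀ (sub_pos.2 hq), zero_mul] at hs
    have : W x₁ ≤ W q := hmin (Icc_subset_Icc hx₁.1 (min_le_right u b) (right_mem_Icc.2 hq.le))
    linarith
  · obtain ⟨l, hl, hsub⟩ := mem_nhdsLT_iff_exists_Ioo_subset.1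
      (nhdsWithin_le_of_mem (Icc_mem_nhdsLT_of_mem ⟨hab, le_rfl⟩) hneg)
    set p := max l a
    have hp : p < x₁ := max_lt hl hab
    have hs := (hslope p x₁ (le_max_right l a) hp le_rfl
      fun x hx => hsub ⟨(le_max_left l a).trans_lt hx.1, hx.2⟩).1
    rw [hWx₁, slope_def_field, lt_div_iff₀ (sub_pos.2 hp), zero_mul] at hs
    have : W x₁ ≤ W p := hmin (Icc_subset_Icc (le_max_right l a) le_rfl (left_mem_Icc.2 hp.le))
    linarith

variable {h : ℝ → ℝ}

lemma reaction_nonpos_of_isMinOn_of_neumann (hab : a < b)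
    (hW : ∀ x ∈ Icc a b, HasDerivWithinAt W (W' x) (Icc a b) x)
    (hW'c : ContinuousOn W' (Icc a b)) (hW'' : ∀ x ∈ Ioo a b, HasDerivAt W' (-h (W x)) x)
    (hh : Continuous h) (ha : W' a = 0) (hb : W' b = 0)
    (hx₁ : x₁ ∈ Icc a b) (hmin : IsMinOn W (Icc a b) x₁) : h (W x₁) ≤ 0 :=
  neg_nonneg.1 <| deriv2_nonneg_of_isMinOn_of_neumann (G := fun x => -h (W x)) hab hW hW'c hW''
    (hh.comp_continuousOn fun x hx => (hW x hx).continuousWithinAt).neg ha hb hx₁ hmin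

lemma reaction_nonneg_of_isMaxOn_of_neumann (hab : a < b)
    (hW : ∀ x ∈ Icc a b, HasDerivWithinAt W (W' x) (Icc a b) x)
    (hW'c : ContinuousOn W' (Icc a b)) (hW'' : ∀ x ∈ Ioo a b, HasDerivAt W' (-h (W x)) x)
    (hh : Continuous h) (ha : W' a = 0) (hb : W' b = 0)
    (hx₁ : x₁ ∈ Icc a b) (hmax : IsMaxOn W (Icc a b) x₁) : 0 ≤ h (W x₁) :=
  deriv2_nonneg_of_isMinOn_of_neumann (G := fun x => h (W x)) hab (fun x hx => (hW x hx).neg)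
    hW'c.neg (fun x hx => (hW'' x hx).neg.congr_deriv (neg_neg _))
    (hh.comp_continuousOn fun x hx => (hW x hx).continuousWithinAt) (by simp [ha]) (by simp [hb])
    hx₁ hmax.neg

end Neumann

/-- Theorem 2.8 (1D case): a non-constant regular stationary solution touches a
non-degenerate constant stationary solution (ū, v̄) at which
(1 / f_u) · (f_u g_v − f_v g_u) > 0. -/
theorem stmt_2
    (f g : ℝ → ℝ → ℝ)
    (hf : ContDiff ℝ 2 (Function.uncurry f))
    (hg : ContDiff ℝ 2 (Function.uncurry g))
    (L : ℝ) (hL : 0 < L)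
    (U V V' V'' : ℝ → ℝ) (k : ℝ → ℝ) (α β : ℝ)
    -- (U, V) is a stationary solution in (0, L) with Neumann boundary conditions
    (hV' : ∀ x ∈ Icc 0 L, HasDerivWithinAt V (V' x) (Icc 0 L) x)
    (hV'c : ContinuousOn V' (Icc 0 L))
    (hV'' : ∀ x ∈ Ioo 0 L, HasDerivAt V' (V'' x) x)
    (heq : ∀ x ∈ Ioo 0 L, V'' x + g (U x) (V x) = 0)
    (hN0 : V' 0 = 0) (hNL : V' L = 0)
    -- regularity of the solution: U = k ∘ V with f(k(v), v) = 0 on an open interval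
    -- containing the range of V
    (hk : ContDiff ℝ 1 k)
    (hUk : ∀ x ∈ Icc 0 L, U x = k (V x))
    (hrange : ∀ x ∈ Icc 0 L, V x ∈ Ioo α β)
    (hfk : ∀ v ∈ Ioo α β, f (k v) v = 0)
    -- the solution is non-constant
    (hnc : ¬ ∃ c : ℝ × ℝ, ∀ x ∈ Icc 0 L, (U x, V x) = c)
    -- every constant solution touched by (U, V) is non-degenerate
    (hnondeg : ∀ x ∈ Icc 0 L, f (U x) (V x) = 0 → g (U x) (V x) = 0 →
      pd1 f (U x) (V x) + pd2 g (U x) (V x) ≠ 0 ∧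
      pd1 f (U x) (V x) * pd2 g (U x) (V x)
        - pd2 f (U x) (V x) * pd1 g (U x) (V x) ≠ 0 ∧
      pd1 f (U x) (V x) ≠ 0) :
    ∃ x₀ ∈ Icc 0 L,
      f (U x₀) (V x₀) = 0 ∧ g (U x₀) (V x₀) = 0 ∧
      (1 / pd1 f (U x₀) (V x₀)) *
        (pd1 f (U x₀) (V x₀) * pd2 g (U x₀) (V x₀)
          - pd2 f (U x₀) (V x₀) * pd1 g (U x₀) (V x₀)) > 0 := by
  set h : ℝ → ℝ := fun v => g (k v) v
  have hhc : Continuous h := hg.continuous.comp (hk.continuous.prodMk continuous_id)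
  have hVc : ContinuousOn V (Icc 0 L) := fun x hx => (hV' x hx).continuousWithinAt
  have hV''h : ∀ x ∈ Ioo 0 L, HasDerivAt V' (-h (V x)) x := fun x hx => by
    have hUx := hUk x (Ioo_subset_Icc_self hx)
    exact (hV'' x hx).congr_deriv (by linarith [hUx ▸ heq x hx])
  obtain ⟨xmin, hxmin, hmin⟩ := isCompact_Icc.exists_isMinOn (nonempty_Icc.2 hL.le) hVc
  obtain ⟨xmax, hxmax, hmax⟩ := isCompact_Icc.exists_isMaxOn (nonempty_Icc.2 hL.le) hVc
  have hab : V xmin < V xmax := by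
    refine lt_of_not_ge fun hle => hnc ⟨(k (V xmin), V xmin), fun x hx => ?_⟩
    rw [hUk x hx, le_antisymm ((hmax hx).trans hle) (hmin hx)]
  have hsurj : Icc (V xmin) (V xmax) ⊆ V '' Icc 0 L :=
    isPreconnected_Icc.intermediate_value hxmin hxmax hVc
  have hzeros : ∀ v ∈ Icc (V xmin) (V xmax), h v = 0 →
      HasDerivAt h (branchDeriv f g k v) v ∧ branchDeriv f g k v ≠ 0 := by
    rintro v hv hv0
    obtain ⟨x, hx, rfl⟩ := hsurj hv
    obtain ⟨-, hdet, hfu⟩ :=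
      hnondeg x hx (hUk x hx ▸ hfk _ (hrange x hx)) (hUk x hx ▸ hv0)
    rw [hUk x hx] at hdet hfu
    exact ⟨hasDerivAt_comp_branch (hf.differentiable two_ne_zero _)
      (hg.differentiable two_ne_zero _) (hk.differentiable one_ne_zero _).hasDerivAt
      (eventually_of_mem (Ioo_mem_nhds (hrange x hx).1 (hrange x hx).2) hfk) hfu,
      mul_ne_zero (one_div_ne_zero hfu) hdet⟩
  obtain ⟨v, hv, hv0, hDv⟩ := exists_zero_deriv_pos_of_nonpos_of_nonneg hab hhc.continuousOn
    (reaction_nonpos_of_isMinOn_of_neumann hL hV' hV'c hV''h hhc hN0 hNL hxmin hmin)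
    (reaction_nonneg_of_isMaxOn_of_neumann hL hV' hV'c hV''h hhc hN0 hNL hxmax hmax) hzeros
  obtain ⟨x₀, hx₀, rfl⟩ := hsurj hv
  exact ⟨x₀, hx₀, by rw [hUk x₀ hx₀]; exact ⟨hfk _ (hrange x₀ hx₀), hv0, hDv⟩⟩
end

section
/- Analytic Fredholm theorem: Let H be a complex Hilbert space, let D ⊆ ℂ be an open connected set, and let f : D → (H →L[ℂ] H) be an analytic operator-valued function such that f(z) is a compact operator for every z ∈ D. Then either (a) the operator Id − f(z) has no bounded inverse for any z ∈ D, or (b) there exists a set S ⊆ D having no accumulation points in D such that for every z ∈ D \ S the operator Id − f(z) has a bounded inverse (is an invertible element of the bounded operators on H). -/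
/-!
Compact operators on a Hilbert space are norm limits of finite-rank ones, so near `z₀` we can
write `f z₀ = ι ∘ F + E` with `F : H → V` for a finite-dimensional `V ⊆ H` and `‖E‖ < 1`. For `z`
near `z₀` the operator `1 - (f z - ι ∘ F)` is invertible with analytic inverse `R z`, and
`1 - f z = (1 - ι ∘ F ∘ R z) (1 - (f z - ι ∘ F))`. Since `1 - a b` is invertible iff `1 - b a`
is, `1 - f z` is invertible iff `det (1 - F ∘ R z ∘ ι) ≠ 0` on `V`. This determinant is analytic,
so near each point either `1 - f` is nowhere invertible or it is invertible on a punctured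
neighbourhood; connectedness of `D` makes one of the two alternatives hold throughout `D`.
-/

open Filter Topology Set Metric

theorem IsPreconnected.forall_eventually_not_or_forall_eventually_nhdsNE
    {X : Type*} [TopologicalSpace X] {D : Set X} (hD : IsPreconnected D) {p : X → Prop}
    (h : ∀ z ∈ D, (∀ᶠ w in 𝓝 z, ¬ p w) ∨ ∀ᶠ w in 𝓝[≠] z, p w) :
    (∀ z ∈ D, ∀ᶠ w in 𝓝 z, ¬ p w) ∨ ∀ z ∈ D, ∀ᶠ w in 𝓝[≠] z, p w := by
  by_cases hne : ∃ z ∈ D, ∀ᶠ w in 𝓝 z, ¬ p w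
  · left
    refine hD.subset_of_closure_inter_subset isOpen_setOfPred_eventually_nhds hne ?_
    rintro z ⟨hz, hzD⟩
    refine (h z hzD).elim id fun hp => ?_
    obtain ⟨w, hwu, hw⟩ := ((mem_closure_iff_frequently.mp hz).and_eventually
      (eventually_nhdsWithin_iff.mp hp)).exists
    rcases eq_or_ne w z with rfl | hwz
    · exact hwu
    · exact absurd (hw hwz) (show ∀ᶠ v in 𝓝 w, ¬ p v from hwu).self_of_nhds
  · push Not at hne
    exact .inr fun z hz => (h z hz).resolve_left (hne z hz)

theorem IsCompactOperator.exists_finiteDimensional_norm_sub_subtypeL_comp_lt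
    {𝕜 E H : Type*} [RCLike 𝕜] [NormedAddCommGroup E] [NormedSpace 𝕜 E]
    [NormedAddCommGroup H] [InnerProductSpace 𝕜 H] {T : E →L[𝕜] H} (hT : IsCompactOperator T)
    {ε : ℝ} (hε : 0 < ε) :
    ∃ (V : Submodule 𝕜 H) (_ : FiniteDimensional 𝕜 V) (F : E →L[𝕜] V),
      ‖T - V.subtypeL ∘L F‖ < ε := by
  obtain ⟨t, ht, hcover⟩ := totallyBounded_iff.mp
    (hT.isCompact_closure_image_closedBall 1).totallyBounded (ε / 2) (half_pos hε)
  let V := Submodule.span 𝕜 t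
  have : FiniteDimensional 𝕜 V := FiniteDimensional.span_of_finite 𝕜 ht
  refine ⟨V, this, V.orthogonalProjectionOnto ∘L T, ?_⟩
  refine (ContinuousLinearMap.opNorm_le_of_unit_norm (half_pos hε).le fun x hx => ?_).trans_lt
    (half_lt_self hε)
  obtain ⟨y, hyt, hy⟩ := mem_iUnion₂.mp (hcover (subset_closure ⟨x, by simp [hx], rfl⟩))
  calc ‖(T - V.subtypeL ∘L V.orthogonalProjectionOnto ∘L T) x‖
      = ‖T x - V.starProjection (T x)‖ := rfl
    _ ≤ ‖T x - y‖ := by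
      rw [Submodule.starProjection_minimal]
      exact ciInf_le ⟨0, forall_mem_range.mpr fun _ => norm_nonneg _⟩
        (⟨y, Submodule.subset_span hyt⟩ : V)
    _ ≤ ε / 2 := by rw [← dist_eq_norm]; exact (mem_ball.mp hy).le

namespace ContinuousLinearMap

section OneSubComp

variable {R M N : Type*} [Ring R] [TopologicalSpace M] [AddCommGroup M] [Module R M]
  [IsTopologicalAddGroup M] [TopologicalSpace N] [AddCommGroup N] [Module R N]
  [IsTopologicalAddGroup N]

theorem isUnit_one_sub_comp_of_isUnit_one_sub_comp {a : M →L[R] N} {b : N →L[R] M}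
    (h : IsUnit (1 - a ∘L b)) : IsUnit (1 - b ∘L a) := by
  obtain ⟨u, hu⟩ := h
  have hr : (1 - a ∘L b) * ↑u⁻¹ = 1 := hu ▸ u.mul_inv
  have hl : ↑u⁻¹ * (1 - a ∘L b) = 1 := hu ▸ u.inv_mul
  refine isUnit_iff_exists.mpr ⟨1 + b ∘L (↑u⁻¹ : N →L[R] N) ∘L a, ?_, ?_⟩ <;> ext x
  · have := congrArg (fun T => b (T (a x))) hr
    simp only [mul_apply_eq_comp, sub_apply, one_apply_eq_self, comp_apply, map_sub, add_apply,
      map_add] at this ⊢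
    linear_combination (norm := abel) this
  · have := congrArg (fun T => b (T (a x))) hl
    simp only [mul_apply_eq_comp, sub_apply, one_apply_eq_self, comp_apply, map_sub,
      add_apply] at this ⊢
    linear_combination (norm := abel) this

theorem isUnit_one_sub_comp_comm (a : M →L[R] N) (b : N →L[R] M) :
    IsUnit (1 - a ∘L b) ↔ IsUnit (1 - b ∘L a) :=
  ⟨isUnit_one_sub_comp_of_isUnit_one_sub_comp, isUnit_one_sub_comp_of_isUnit_one_sub_comp⟩

end OneSubComp

section Det

variable {𝕜 E : Type*} [NontriviallyNormedField 𝕜] [CompleteSpace 𝕜] [NormedAddCommGroup E]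
  [NormedSpace 𝕜 E] [FiniteDimensional 𝕜 E]

theorem isUnit_iff_isUnit_det (A : E →L[𝕜] E) : IsUnit A ↔ IsUnit A.det :=
  (MulEquiv.isUnit_map (Module.End.toContinuousLinearMap E).symm.toMulEquiv).symm.trans
    (LinearMap.isUnit_iff_isUnit_det _)

theorem analyticOnNhd_det : AnalyticOnNhd 𝕜 (fun A : E →L[𝕜] E => A.det) univ := by
  classical
  let b := Module.finBasis 𝕜 E
  have hdet : (fun A : E →L[𝕜] E => A.det) = fun A : E →L[𝕜] E =>
      MvPolynomial.eval (fun p => LinearMap.toMatrix b b (A : E →ₗ[𝕜] E) p.1 p.2)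
        (Matrix.mvPolynomialX _ _ 𝕜).det := by
    ext A
    rw [det, ← LinearMap.det_toMatrix b, Matrix.eval_det_mvPolynomialX]
    rfl
  rw [hdet]
  refine fun A _ => AnalyticAt.aeval_mvPolynomial (fun p => ?_) _
  simp only [LinearMap.toMatrix_apply, ← b.coord_apply]
  exact ((b.coord p.1).toContinuousLinearMap ∘L apply 𝕜 E (b p.2)).analyticAt A

end Det

end ContinuousLinearMap

theorem isUnit_one_sub_add_iff {R : Type*} [Ring R] {s t : R} (ht : IsUnit (1 - t)) :
    IsUnit (1 - (s + t)) ↔ IsUnit (1 - s * Ring.inverse (1 - t)) := by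
  have : 1 - (s + t) = (1 - s * Ring.inverse (1 - t)) * (1 - t) := by
    rw [sub_mul, one_mul, mul_assoc, Ring.inverse_mul_cancel _ ht, mul_one]
    abel
  rw [this, IsUnit.mul_right_iff ht]

theorem AnalyticAt.eventually_not_isUnit_one_sub_or_eventually_isUnit_one_sub
    {𝕜 H : Type*} [RCLike 𝕜] [NormedAddCommGroup H] [InnerProductSpace 𝕜 H] [CompleteSpace H]
    {f : 𝕜 → H →L[𝕜] H} {z₀ : 𝕜} (hf : AnalyticAt 𝕜 f z₀) (hc : IsCompactOperator (f z₀)) :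
    (∀ᶠ z in 𝓝 z₀, ¬ IsUnit (1 - f z)) ∨ ∀ᶠ z in 𝓝[≠] z₀, IsUnit (1 - f z) := by
  obtain ⟨V, _, F, hF⟩ := hc.exists_finiteDimensional_norm_sub_subtypeL_comp_lt one_pos
  let R : 𝕜 → H →L[𝕜] H := fun z => Ring.inverse (1 - (f z - V.subtypeL ∘L F))
  let φ : 𝕜 → 𝕜 := fun z => (1 - F ∘L R z ∘L V.subtypeL).det
  have hR : AnalyticAt 𝕜 R z₀ :=
    AnalyticAt.comp (g := Ring.inverse)
      (analyticOnNhd_inverse _ (isUnit_one_sub_of_norm_lt_one hF))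
      (analyticAt_const.sub (hf.sub analyticAt_const))
  have hφ : AnalyticAt 𝕜 φ z₀ := by
    let L : (H →L[𝕜] H) →L[𝕜] V →L[𝕜] V :=
      ContinuousLinearMap.compL 𝕜 V H V F ∘L (ContinuousLinearMap.compL 𝕜 V H H).flip V.subtypeL
    exact (ContinuousLinearMap.analyticOnNhd_det _ (mem_univ _)).comp
      (analyticAt_const.sub ((L.analyticAt _).comp hR))
  have hnear : ∀ᶠ z in 𝓝 z₀, ‖f z - V.subtypeL ∘L F‖ < 1 :=
    (hf.continuousAt.sub continuousAt_const).norm.eventually_lt continuousAt_const hF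
  have key : ∀ᶠ z in 𝓝 z₀, IsUnit (1 - f z) ↔ φ z ≠ 0 := by
    filter_upwards [hnear] with z hz
    rw [← add_sub_cancel (V.subtypeL ∘L F) (f z), isUnit_one_sub_add_iff
      (isUnit_one_sub_of_norm_lt_one hz)]
    change IsUnit (1 - V.subtypeL ∘L F ∘L R z) ↔ _
    rw [ContinuousLinearMap.isUnit_one_sub_comp_comm, ContinuousLinearMap.isUnit_iff_isUnit_det,
      isUnit_iff_ne_zero]
    rfl
  refine hφ.eventually_eq_zero_or_eventually_ne_zero.imp (fun h => ?_) fun h => ?_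
  · filter_upwards [h, key] with z h0 hk
    rwa [hk, not_not]
  · filter_upwards [h, nhdsWithin_le_nhds key] with z h0 hk
    exact hk.mpr h0

theorem stmt_6_general
    {H : Type*} [NormedAddCommGroup H] [InnerProductSpace ℂ H] [CompleteSpace H]
    (D : Set ℂ) (hDconn : IsConnected D)
    (f : ℂ → (H →L[ℂ] H))
    (hf : AnalyticOnNhd ℂ f D)
    (hcompact : ∀ z ∈ D, IsCompactOperator (f z)) :
    (∀ z ∈ D, ¬ IsUnit ((1 : H →L[ℂ] H) - f z)) ∨
    (∃ S : Set ℂ, (∀ z ∈ D, ¬ AccPt z (Filter.principal S)) ∧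
      ∀ z ∈ D \ S, IsUnit ((1 : H →L[ℂ] H) - f z)) := by
  have hlocal (z) (hz : z ∈ D) :=
    (hf z hz).eventually_not_isUnit_one_sub_or_eventually_isUnit_one_sub (hcompact z hz)
  refine (hDconn.isPreconnected.forall_eventually_not_or_forall_eventually_nhdsNE hlocal).imp
    (fun h z hz => (h z hz).self_of_nhds) fun h => ⟨{z | ¬ IsUnit (1 - f z)}, fun z hz => ?_,
      fun z hz => not_not.mp hz.2⟩
  simpa [accPt_iff_frequently_nhdsNE] using h z hz

/-- Analytic Fredholm theorem: for an analytic family z ↦ f(z) of compact operators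
on a complex Hilbert space H, defined on an open connected set D ⊆ ℂ, either
Id − f(z) is invertible for no z ∈ D, or it is invertible for all z outside a set
S that has no accumulation points in D. -/
theorem stmt_6
    {H : Type*} [NormedAddCommGroup H] [InnerProductSpace ℂ H] [CompleteSpace H]
    (D : Set ℂ) (hD : IsOpen D) (hDconn : IsConnected D)
    (f : ℂ → (H →L[ℂ] H))
    (hf : AnalyticOnNhd ℂ f D)
    (hcompact : ∀ z ∈ D, IsCompactOperator (f z)) :
    (∀ z ∈ D, ¬ IsUnit ((1 : H →L[ℂ] H) - f z)) ∨
    (∃ S : Set ℂ, (∀ z ∈ D, ¬ AccPt z (Filter.principal S)) ∧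
      ∀ z ∈ D \ S, IsUnit ((1 : H →L[ℂ] H) - f z)) :=
  stmt_6_general D hDconn f hf hcompact
end

section
/- Let a, d_c, d_b, d, d_g, κ₀ be positive reals with a > d_c, and set Θ = 4 d_g (d_c/(a−d_c))² d_b (d_b+d). If κ₀² > Θ, then, with w_± = (κ₀ ± √(κ₀² − Θ))/(2 d_g) and u_± = (d_c/(a−d_c)) (d_b+d) / w_±, both pairs (u₋, w₋) and (u₊, w₊) have positive coordinates and are steady states of the kinetic system, i.e. (a u w/(d_b + d + u w) − d_c) u = 0 and −d_g w − (d_b/(d_b+d)) u² w + κ₀ = 0; moreover, every pair (u, w) with u > 0 and w > 0 satisfying these two equations equals (u₋, w₋) or (u₊, w₊). -/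
/-- Lemma B.1: if κ₀² > Θ, the kinetic system of the reduced early-carcinogenesis
model has exactly the two positive steady states (u₋, w₋) and (u₊, w₊). -/
theorem stmt_8
    (a dc db d dg κ₀ : ℝ)
    (ha : 0 < a) (hdc : 0 < dc) (hdb : 0 < db) (hd : 0 < d) (hdg : 0 < dg)
    (hκ : 0 < κ₀) (hadc : dc < a)
    (Θ : ℝ) (hΘ : Θ = 4 * dg * (dc / (a - dc)) ^ 2 * db * (db + d))
    (hκΘ : κ₀ ^ 2 > Θ)
    (wm wp um up : ℝ)
    (hwm : wm = (κ₀ - Real.sqrt (κ₀ ^ 2 - Θ)) / (2 * dg))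
    (hwp : wp = (κ₀ + Real.sqrt (κ₀ ^ 2 - Θ)) / (2 * dg))
    (hum : um = dc / (a - dc) * (db + d) / wm)
    (hup : up = dc / (a - dc) * (db + d) / wp) :
    (0 < um ∧ 0 < wm ∧ 0 < up ∧ 0 < wp) ∧
    ((a * um * wm / (db + d + um * wm) - dc) * um = 0 ∧
      -dg * wm - db / (db + d) * um ^ 2 * wm + κ₀ = 0) ∧
    ((a * up * wp / (db + d + up * wp) - dc) * up = 0 ∧
      -dg * wp - db / (db + d) * up ^ 2 * wp + κ₀ = 0) ∧
    (∀ u w : ℝ, 0 < u → 0 < w →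
      (a * u * w / (db + d + u * w) - dc) * u = 0 →
      -dg * w - db / (db + d) * u ^ 2 * w + κ₀ = 0 →
      (u = um ∧ w = wm) ∨ (u = up ∧ w = wp)) := by
  have hac : 0 < a - dc := by linarith
  have hdbd : 0 < db + d := by linarith
  have hΘpos : 0 < Θ := by rw [hΘ]; positivity
  set s := Real.sqrt (κ₀ ^ 2 - Θ) with hs
  have hs0 : 0 ≤ s := Real.sqrt_nonneg _
  have hs2 : s ^ 2 = κ₀ ^ 2 - Θ := Real.sq_sqrt (by linarith)
  have hsκ : s < κ₀ := by nlinarith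
  have hwm_pos : 0 < wm := by
    rw [hwm]; apply div_pos (by linarith) (by positivity)
  have hwp_pos : 0 < wp := by
    rw [hwp]; apply div_pos (by linarith) (by positivity)
  have hum_pos : 0 < um := by rw [hum]; positivity
  have hup_pos : 0 < up := by rw [hup]; positivity
  set P : ℝ := dc / (a - dc) * (db + d) with hP
  have hPpos : 0 < P := by positivity
  set C : ℝ := db * (dc / (a - dc)) ^ 2 * (db + d) with hC
  have hΘC : Θ = 4 * dg * C := by rw [hΘ, hC]; ring
  have hdg' : (4 : ℝ) * dg ≠ 0 := by positivity
  -- quadratic identities for wm, wp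
  have hqgen : ∀ t : ℝ, dg * ((κ₀ + t) / (2 * dg)) ^ 2 - κ₀ * ((κ₀ + t) / (2 * dg)) + C
      = (t ^ 2 - κ₀ ^ 2 + 4 * dg * C) / (4 * dg) := by
    intro t; field_simp; ring
  have hqm : dg * wm ^ 2 - κ₀ * wm + C = 0 := by
    rw [hwm, show κ₀ - s = κ₀ + (-s) by ring, hqgen, show (-s) ^ 2 = s ^ 2 by ring,
      hs2, hΘC]
    ring
  have hqp : dg * wp ^ 2 - κ₀ * wp + C = 0 := by
    rw [hwp, hqgen, hs2, hΘC]; ring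
  -- Vieta
  have hsum : wm + wp = κ₀ / dg := by rw [hwm, hwp]; field_simp; ring
  have hprod : wm * wp = C / dg := by
    rw [hwm, hwp, div_mul_div_comm,
      show (κ₀ - s) * (κ₀ + s) = κ₀ ^ 2 - s ^ 2 by ring, hs2, hΘC]
    field_simp; ring
  have hz : db / (db + d) * P ^ 2 = C := by
    rw [hC, hP]; field_simp
  have hdenP : db + d + P ≠ 0 := by positivity
  have hfrac : a * P / (db + d + P) = dc := by
    rw [div_eq_iff hdenP, hP]; field_simp; ring
  have key : ∀ w u : ℝ, 0 < w → u = P / w →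
      (dg * w ^ 2 - κ₀ * w + C = 0) →
      ((a * u * w / (db + d + u * w) - dc) * u = 0 ∧
        -dg * w - db / (db + d) * u ^ 2 * w + κ₀ = 0) := by
    intro w u hw hu hq
    have hwne : w ≠ 0 := ne_of_gt hw
    have huw : u * w = P := by
      rw [hu, div_mul_eq_mul_div, mul_div_assoc, div_self hwne, mul_one]
    constructor
    · rw [mul_assoc, huw, hfrac, sub_self, zero_mul]
    · have step : -dg * w - db / (db + d) * u ^ 2 * w + κ₀
          = -(dg * w ^ 2 - κ₀ * w + C) / w := by
        rw [hu, ← hz]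
        field_simp
        ring
      rw [step, hq, neg_zero, zero_div]
  refine ⟨⟨hum_pos, hwm_pos, hup_pos, hwp_pos⟩, ?_, ?_, ?_⟩
  · exact key wm um hwm_pos (by rw [hum, hP]) hqm
  · exact key wp up hwp_pos (by rw [hup, hP]) hqp
  · intro u w hu hw h1 h2
    have hune : u ≠ 0 := ne_of_gt hu
    have hwne : w ≠ 0 := ne_of_gt hw
    have hden : 0 < db + d + u * w := by positivity
    have h1' : a * u * w / (db + d + u * w) - dc = 0 := by
      rcases mul_eq_zero.1 h1 with h | h
      · exact h
      · exact absurd h hune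
    have h1'' : a * u * w = dc * (db + d + u * w) :=
      (div_eq_iff (ne_of_gt hden)).1 (sub_eq_zero.1 h1')
    have huw : u * w = P := by
      rw [hP, div_mul_eq_mul_div, eq_div_iff (ne_of_gt hac)]
      linear_combination h1''
    have huPw : u = P / w := by
      rw [← huw, mul_div_assoc, div_self hwne, mul_one]
    have hq : dg * w ^ 2 - κ₀ * w + C = 0 := by
      calc dg * w ^ 2 - κ₀ * w + C
          = -w * (-dg * w - db / (db + d) * u ^ 2 * w + κ₀)
            - (db / (db + d) * (u * w) ^ 2 - C) := by ring
        _ = 0 := by rw [h2, huw, hz]; ring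
    have hfac : dg * (w - wm) * (w - wp) = 0 := by
      have e : dg * (w - wm) * (w - wp)
          = dg * w ^ 2 - dg * (wm + wp) * w + dg * (wm * wp) := by ring
      rw [e, hsum, hprod, mul_div_cancel₀ _ (ne_of_gt hdg),
        mul_div_cancel₀ _ (ne_of_gt hdg)]
      exact hq
    rcases mul_eq_zero.1 hfac with h | h
    · rcases mul_eq_zero.1 h with h' | h'
      · exact absurd h' (ne_of_gt hdg)
      · left
        have hwwm : w = wm := by linarith [sub_eq_zero.1 h']
        exact ⟨by rw [huPw, hwwm, hum, hP], hwwm⟩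
    · right
      have hwwp : w = wp := by linarith [sub_eq_zero.1 h]
      exact ⟨by rw [huPw, hwwp, hup, hP], hwwp⟩
end

section
/- Let a, d_c, d_b, d, d_g, κ₀ be positive reals with a > d_c, set Θ = 4 d_g (d_c/(a−d_c))² d_b (d_b+d), assume κ₀² > Θ, and set w₊ = (κ₀ + √(κ₀² − Θ))/(2 d_g) and u₊ = (d_c/(a−d_c)) (d_b+d)/w₊. Then the determinant of the Jacobian matrix of the kinetic system at (u₊, w₊) is negative: (d_c/a)(a−d_c) · (−d_g − (d_b/(d_b+d)) u₊²) + ((a−d_c)²/(a(d_b+d))) u₊² · (2 d_b d_c/(a−d_c)) < 0; hence the steady state (u₊, w₊) is linearly unstable. -/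
/-- The determinant of the Jacobian of the kinetic system at the steady state
(u₊, w₊) is negative, so (u₊, w₊) is linearly unstable. -/
theorem stmt_10
    (a dc db d dg κ₀ : ℝ)
    (ha : 0 < a) (hdc : 0 < dc) (hdb : 0 < db) (hd : 0 < d) (hdg : 0 < dg)
    (hκ : 0 < κ₀) (hadc : dc < a)
    (Θ : ℝ) (hΘ : Θ = 4 * dg * (dc / (a - dc)) ^ 2 * db * (db + d))
    (hκΘ : κ₀ ^ 2 > Θ)
    (wp up : ℝ)
    (hwp : wp = (κ₀ + Real.sqrt (κ₀ ^ 2 - Θ)) / (2 * dg))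
    (hup : up = dc / (a - dc) * (db + d) / wp) :
    dc / a * (a - dc) * (-dg - db / (db + d) * up ^ 2)
      + (a - dc) ^ 2 / (a * (db + d)) * up ^ 2 * (2 * db * dc / (a - dc)) < 0 := by
  have hac : 0 < a - dc := by linarith
  have hbd : 0 < db + d := by linarith
  set s := Real.sqrt (κ₀ ^ 2 - Θ) with hsdef
  have hs0 : 0 ≤ s := Real.sqrt_nonneg _
  have hs2 : s ^ 2 = κ₀ ^ 2 - Θ := Real.sq_sqrt (by linarith)
  have hwp0 : 0 < wp := by
    rw [hwp]; positivity
  -- key: db * up^2 < dg * (db + d)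
  have hΘlt : Θ < (κ₀ + s) ^ 2 := by nlinarith
  have hwp2 : db * (dc / (a - dc)) ^ 2 * (db + d) < dg * wp ^ 2 := by
    have : dg * wp ^ 2 = (κ₀ + s) ^ 2 / (4 * dg) := by
      rw [hwp, div_pow]; field_simp; ring
    rw [this, lt_div_iff₀ (by positivity)]
    rw [hΘ] at hΘlt
    nlinarith
  have hkey : db * up ^ 2 < dg * (db + d) := by
    rw [hup, div_pow, ← mul_div_assoc, div_lt_iff₀ (by positivity)]
    nlinarith [mul_lt_mul_of_pos_left hwp2 hbd]
  -- determinant rewriting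
  have heq : dc / a * (a - dc) * (-dg - db / (db + d) * up ^ 2)
      + (a - dc) ^ 2 / (a * (db + d)) * up ^ 2 * (2 * db * dc / (a - dc))
      = dc * (a - dc) / (a * (db + d)) * (db * up ^ 2 - dg * (db + d)) := by
    field_simp
    ring
  rw [heq]
  have hpos : 0 < dc * (a - dc) / (a * (db + d)) := by positivity
  nlinarith
end

section
/- Let a, d_c, d_b, d, d_g, κ₀ be positive reals with a > d_c, set Θ = 4 d_g (d_c/(a−d_c))² d_b (d_b+d), assume κ₀² > Θ, and set w₋ = (κ₀ − √(κ₀² − Θ))/(2 d_g) and u₋ = (d_c/(a−d_c)) (d_b+d)/w₋. Then w₋² < Θ/(4 d_g²), and the determinant of the Jacobian matrix of the kinetic system at (u₋, w₋) is positive: (d_c/a)(a−d_c) · (−d_g − (d_b/(d_b+d)) u₋²) + ((a−d_c)²/(a(d_b+d))) u₋² · (2 d_b d_c/(a−d_c)) > 0. -/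
set_option maxHeartbeats 1000000


/-- At the steady state (u₋, w₋) one has w₋² < Θ/(4 d_g²) and the determinant of
the Jacobian of the kinetic system is positive. -/
theorem stmt_11
    (a dc db d dg κ₀ : ℝ)
    (ha : 0 < a) (hdc : 0 < dc) (hdb : 0 < db) (hd : 0 < d) (hdg : 0 < dg)
    (hκ : 0 < κ₀) (hadc : dc < a)
    (Θ : ℝ) (hΘ : Θ = 4 * dg * (dc / (a - dc)) ^ 2 * db * (db + d))
    (hκΘ : κ₀ ^ 2 > Θ)
    (wm um : ℝ)
    (hwm : wm = (κ₀ - Real.sqrt (κ₀ ^ 2 - Θ)) / (2 * dg))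
    (hum : um = dc / (a - dc) * (db + d) / wm) :
    wm ^ 2 < Θ / (4 * dg ^ 2) ∧
    dc / a * (a - dc) * (-dg - db / (db + d) * um ^ 2)
      + (a - dc) ^ 2 / (a * (db + d)) * um ^ 2 * (2 * db * dc / (a - dc)) > 0 := by
  have hadc' : 0 < a - dc := by linarith
  have hΘpos : 0 < Θ := by
    rw [hΘ]; positivity
  set s := Real.sqrt (κ₀ ^ 2 - Θ) with hs
  have hs0 : 0 ≤ s := Real.sqrt_nonneg _
  have hs2 : s ^ 2 = κ₀ ^ 2 - Θ := Real.sq_sqrt (by linarith)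
  clear_value s
  have hspos : 0 < s := by
    rcases hs0.lt_or_eq with h | h
    · exact h
    · exfalso; nlinarith
  have hsκ : s < κ₀ := by nlinarith
  have hwmpos : 0 < wm := by
    rw [hwm]; exact div_pos (by linarith) (by positivity)
  have hwmval : 2 * dg * wm = κ₀ - s := by
    rw [hwm]; field_simp
  have hkey : (κ₀ - s) ^ 2 < Θ := by nlinarith
  have h1 : wm ^ 2 < Θ / (4 * dg ^ 2) := by
    rw [lt_div_iff₀ (by positivity)]
    nlinarith
  refine ⟨h1, ?_⟩
  have humwm : um * wm = dc / (a - dc) * (db + d) := by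
    rw [hum]; field_simp
  have humpos : 0 < um := by
    rw [hum]; positivity
  have hcdef : dc / (a - dc) * (a - dc) = dc := by field_simp
  have hum2 : db * um ^ 2 - dg * (db + d) > 0 := by
    have h2 : wm ^ 2 * dg < (dc / (a - dc)) ^ 2 * db * (db + d) := by
      have : Θ / (4 * dg ^ 2) = (dc / (a - dc)) ^ 2 * db * (db + d) / dg := by
        rw [hΘ]; field_simp
      rw [this] at h1
      calc wm ^ 2 * dg < (dc / (a - dc)) ^ 2 * db * (db + d) / dg * dg := by
            exact mul_lt_mul_of_pos_right h1 hdg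
        _ = (dc / (a - dc)) ^ 2 * db * (db + d) := by field_simp
    have h3 : (um * wm) ^ 2 = (dc / (a - dc)) ^ 2 * (db + d) ^ 2 := by
      rw [humwm]; ring
    have hw2 : 0 < wm ^ 2 := by positivity
    have hmul := mul_lt_mul_of_pos_right h2 (show (0:ℝ) < db + d by positivity)
    by_contra hcon
    push_neg at hcon
    have hle : db * um ^ 2 ≤ dg * (db + d) := by linarith
    have e1 : db * um ^ 2 * wm ^ 2 ≤ dg * (db + d) * wm ^ 2 :=
      mul_le_mul_of_nonneg_right hle hw2.le
    have e3 : db * um ^ 2 * wm ^ 2 = db * (dc / (a - dc)) ^ 2 * (db + d) ^ 2 := by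
      have h4 : db * um ^ 2 * wm ^ 2 = db * (um * wm) ^ 2 := by ring
      rw [h4, h3]; ring
    nlinarith [hmul, e1, e3]
  have hdet : dc / a * (a - dc) * (-dg - db / (db + d) * um ^ 2)
      + (a - dc) ^ 2 / (a * (db + d)) * um ^ 2 * (2 * db * dc / (a - dc))
      = dc * (a - dc) / (a * (db + d)) * (db * um ^ 2 - dg * (db + d)) := by
    field_simp
    ring
  rw [hdet]
  positivity
end

section
/- Let a, d_c, d_b, d, d_g, κ₀ be positive reals with a > d_c, set Θ = 4 d_g (d_c/(a−d_c))² d_b (d_b+d), assume κ₀² > Θ, and set w₋ = (κ₀ − √(κ₀² − Θ))/(2 d_g) and u₋ = (d_c/(a−d_c)) (d_b+d)/w₋. Write σ = (d_c/a)(a−d_c). If either σ ≤ d_g, or σ > d_g and, with β = σ/(σ − d_g), one has β/2 > 1 or κ₀² > β² Θ/(4(β−1)), then the trace of the Jacobian matrix of the kinetic system at (u₋, w₋) is negative: σ − d_g − (d_b/(d_b+d)) u₋² < 0. -/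
/-!
At a steady state the `w`-equation gives `d_g + (d_b/(d_b+d)) ū² = κ₀/w̄`, so the trace equals
`σ - κ₀/w̄` and is negative exactly when `σ w₋ < κ₀`. Since `w₋` is the smaller root of
`d_g w² - κ₀ w + Θ/(4 d_g)`, this reads `σ (κ₀ - √(κ₀² - Θ)) < 2 d_g κ₀`, which holds trivially
when `σ ≤ 2 d_g` and otherwise, after squaring, is `σ² Θ < 4 d_g (σ - d_g) κ₀²`. In terms of
`β = σ/(σ - d_g)` these two alternatives are `β/2 > 1` and `κ₀² > β² Θ/(4(β-1))`.
-/

open Real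

section LowerRoot

variable {dg κ₀ Θ : ℝ}

theorem lower_root_pos (hdg : 0 < dg) (hκ : 0 < κ₀) (hΘ : 0 < Θ) :
    0 < (κ₀ - √(κ₀ ^ 2 - Θ)) / (2 * dg) := by
  have : √(κ₀ ^ 2 - Θ) < κ₀ := (sqrt_lt' hκ).2 (by linarith)
  exact div_pos (by linarith) (by positivity)

theorem lower_root_quadratic_eq_zero (hdg : dg ≠ 0) (hΘκ : Θ ≤ κ₀ ^ 2) :
    dg * ((κ₀ - √(κ₀ ^ 2 - Θ)) / (2 * dg)) ^ 2 - κ₀ * ((κ₀ - √(κ₀ ^ 2 - Θ)) / (2 * dg))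
      + Θ / (4 * dg) = 0 := by
  have hs : √(κ₀ ^ 2 - Θ) ^ 2 = κ₀ ^ 2 - Θ := sq_sqrt (by linarith)
  field_simp
  linear_combination 4 * hs

theorem mul_lower_root_lt {σ : ℝ} (hdg : 0 < dg) (hκ : 0 < κ₀) (hΘ : 0 < Θ)
    (hΘκ : Θ < κ₀ ^ 2) (h : σ ≤ 2 * dg ∨ σ ^ 2 * Θ < 4 * dg * (σ - dg) * κ₀ ^ 2) :
    σ * ((κ₀ - √(κ₀ ^ 2 - Θ)) / (2 * dg)) < κ₀ := by
  set s := √(κ₀ ^ 2 - Θ)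
  have hs : s ^ 2 = κ₀ ^ 2 - Θ := sq_sqrt (by linarith)
  have hs0 : 0 < s := sqrt_pos.2 (by linarith)
  have hsκ : s < κ₀ := (sqrt_lt' hκ).2 (by linarith)
  rw [mul_div_assoc', div_lt_iff₀ (by positivity)]
  rcases le_or_gt σ (2 * dg) with hle | hgt
  · calc σ * (κ₀ - s) ≤ 2 * dg * (κ₀ - s) := by gcongr
      _ < κ₀ * (2 * dg) := by nlinarith
  · have hsq : σ ^ 2 * Θ < 4 * dg * (σ - dg) * κ₀ ^ 2 := h.resolve_left hgt.not_ge
    have : ((σ - 2 * dg) * κ₀) ^ 2 < (σ * s) ^ 2 := by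
      rw [mul_pow σ s, hs]; linarith
    have := lt_of_pow_lt_pow_left₀ 2 (mul_nonneg (by linarith) hs0.le) this
    linarith

end LowerRoot

theorem le_two_mul_or_sq_mul_lt_of_beta {dg σ κ₀ Θ : ℝ} (hdg : 0 < dg)
    (h : σ ≤ dg ∨ (dg < σ ∧ (σ / (σ - dg) / 2 > 1 ∨
      κ₀ ^ 2 > (σ / (σ - dg)) ^ 2 * Θ / (4 * (σ / (σ - dg) - 1))))) :
    σ ≤ 2 * dg ∨ σ ^ 2 * Θ < 4 * dg * (σ - dg) * κ₀ ^ 2 := by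
  rcases h with hle | ⟨hlt, hβ | hβ⟩
  · exact Or.inl (by linarith)
  · have hσdg : 0 < σ - dg := by linarith
    rw [gt_iff_lt, lt_div_iff₀ two_pos, lt_div_iff₀ hσdg] at hβ
    exact Or.inl (by linarith)
  · have hσdg : 0 < σ - dg := by linarith
    have hβ' : (σ / (σ - dg)) ^ 2 * Θ / (4 * (σ / (σ - dg) - 1))
        = σ ^ 2 * Θ / (4 * dg * (σ - dg)) := by
      rw [div_sub_one hσdg.ne', sub_sub_cancel]
      field_simp
    rw [hβ', gt_iff_lt, div_lt_iff₀ (by positivity)] at hβ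
    exact Or.inr (by linarith)

theorem steady_state_loss_rate {dg κ₀ c db d w : ℝ} (hdg : dg ≠ 0)
    (hw : w ≠ 0) (hroot : dg * w ^ 2 - κ₀ * w + 4 * dg * c ^ 2 * db * (db + d) / (4 * dg) = 0) :
    dg + db / (db + d) * (c * (db + d) / w) ^ 2 = κ₀ / w := by
  field_simp at hroot ⊢
  linear_combination hroot

theorem stmt_12_general
    (a dc db d dg κ₀ : ℝ)
    (hdc : 0 < dc) (hdb : 0 < db) (hd : 0 < d) (hdg : 0 < dg)
    (hκ : 0 < κ₀) (hadc : dc < a)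
    (Θ : ℝ) (hΘ : Θ = 4 * dg * (dc / (a - dc)) ^ 2 * db * (db + d))
    (hκΘ : κ₀ ^ 2 > Θ)
    (wm um : ℝ)
    (hwm : wm = (κ₀ - Real.sqrt (κ₀ ^ 2 - Θ)) / (2 * dg))
    (hum : um = dc / (a - dc) * (db + d) / wm)
    (σ : ℝ)
    (hcond : σ ≤ dg ∨
      (dg < σ ∧
        (σ / (σ - dg) / 2 > 1 ∨
          κ₀ ^ 2 > (σ / (σ - dg)) ^ 2 * Θ / (4 * (σ / (σ - dg) - 1))))) :
    σ - dg - db / (db + d) * um ^ 2 < 0 := by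
  have hac : 0 < a - dc := by linarith
  have hΘpos : 0 < Θ := by rw [hΘ]; positivity
  have hw : 0 < wm := hwm ▸ lower_root_pos hdg hκ hΘpos
  have hroot := lower_root_quadratic_eq_zero hdg.ne' hκΘ.le
  rw [← hwm, hΘ] at hroot
  have hloss : dg + db / (db + d) * um ^ 2 = κ₀ / wm :=
    hum ▸ steady_state_loss_rate hdg.ne' hw.ne' hroot
  have hσw : σ * wm < κ₀ :=
    hwm ▸ mul_lower_root_lt hdg hκ hΘpos hκΘ (le_two_mul_or_sq_mul_lt_of_beta hdg hcond)
  rw [sub_sub, hloss, sub_neg]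
  exact (lt_div_iff₀ hw).2 hσw

/-- Under the stated parameter conditions, the trace of the Jacobian of the kinetic
system at the steady state (u₋, w₋) is negative. -/
theorem stmt_12
    (a dc db d dg κ₀ : ℝ)
    (ha : 0 < a) (hdc : 0 < dc) (hdb : 0 < db) (hd : 0 < d) (hdg : 0 < dg)
    (hκ : 0 < κ₀) (hadc : dc < a)
    (Θ : ℝ) (hΘ : Θ = 4 * dg * (dc / (a - dc)) ^ 2 * db * (db + d))
    (hκΘ : κ₀ ^ 2 > Θ)
    (wm um : ℝ)
    (hwm : wm = (κ₀ - Real.sqrt (κ₀ ^ 2 - Θ)) / (2 * dg))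
    (hum : um = dc / (a - dc) * (db + d) / wm)
    (σ : ℝ) (hσ : σ = dc / a * (a - dc))
    (hcond : σ ≤ dg ∨
      (dg < σ ∧
        (σ / (σ - dg) / 2 > 1 ∨
          κ₀ ^ 2 > (σ / (σ - dg)) ^ 2 * Θ / (4 * (σ / (σ - dg) - 1))))) :
    σ - dg - db / (db + d) * um ^ 2 < 0 :=
  stmt_12_general a dc db d dg κ₀ hdc hdb hd hdg hκ hadc Θ hΘ hκΘ wm um hwm hum σ hcond
end
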